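/- The family of functions κ ↦ sn_κ(t) is strictly decreasing in κ for each fixed t ∈ (0, π_κ); equivalently, if κ₁ < κ₂ and 0 < t < π_{κ₂}, then sn_{κ₁}(t) > sn_{κ₂}(t). -/
import Mathlib


noncomputable def sn (κ t : ℝ) : ℝ :=
  if 0 < κ then Real.sin (Real.sqrt κ * t) / Real.sqrt κ
  else if κ = 0 then t
  else Real.sinh (Real.sqrt (-κ) * t) / Real.sqrt (-κ)

noncomputable def sn' (κ t : ℝ) : ℝ :=
  if 0 < κ then Real.cos (Real.sqrt κ * t)
  else if κ = 0 then 1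
  else Real.cosh (Real.sqrt (-κ) * t)


section SnAux
open Real Set


lemma lemA {x : ℝ} (hx : 0 < x) (hxπ : x < π) : x * Real.cos x < Real.sin x := by
  rcases le_or_gt (Real.cos x) 0 with h | h
  · have h1 : x * Real.cos x ≤ 0 := mul_nonpos_of_nonneg_of_nonpos hx.le h
    exact h1.trans_lt (Real.sin_pos_of_pos_of_lt_pi hx hxπ)
  · have hx2 : x < π / 2 := by
      by_contra hge
      push_neg at hge
      have := Real.cos_nonpos_of_pi_div_two_le_of_le hge (by linarith [Real.pi_pos])
      linarith
    have htan : x < Real.tan x := Real.lt_tan hx hx2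
    have h2 : x * Real.cos x < Real.tan x * Real.cos x :=
      mul_lt_mul_of_pos_right htan h
    rwa [Real.tan_eq_sin_div_cos, div_mul_cancel₀ _ h.ne'] at h2

lemma lemB {x : ℝ} (hx : 0 < x) : Real.sinh x < x * Real.cosh x := by
  have key : StrictMonoOn (fun y : ℝ => y * Real.cosh y - Real.sinh y) (Ici 0) := by
    apply strictMonoOn_of_deriv_pos (convex_Ici 0)
    · fun_prop
    · intro y hy
      rw [interior_Ici] at hy
      have hd : HasDerivAt (fun y : ℝ => y * Real.cosh y - Real.sinh y)
          (1 * Real.cosh y + y * Real.sinh y - Real.cosh y) y :=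
        ((hasDerivAt_id y).mul (Real.hasDerivAt_cosh y)).sub (Real.hasDerivAt_sinh y)
      rw [hd.deriv]
      have h1 := Real.sinh_pos_iff.2 hy
      have h2 : (0:ℝ) < y := hy
      nlinarith
  have := key (self_mem_Ici) (le_of_lt hx) hx
  simp at this
  linarith

-- sin x / x strictly decreasing on (0, π)
lemma lemC {a b : ℝ} (ha : 0 < a) (hab : a < b) (hb : b < π) :
    Real.sin b / b < Real.sin a / a := by
  have key : StrictAntiOn (fun y : ℝ => Real.sin y / y) (Ioo 0 π) := by
    apply strictAntiOn_of_deriv_neg (convex_Ioo 0 π)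
    · apply ContinuousOn.div Real.continuous_sin.continuousOn continuousOn_id
      intro y hy; exact hy.1.ne'
    · intro y hy
      rw [interior_Ioo] at hy
      have hy0 : (0:ℝ) < y := hy.1
      have hd : HasDerivAt (fun y : ℝ => Real.sin y / y)
          ((Real.cos y * y - Real.sin y * 1) / (y ^ 2)) y :=
        (Real.hasDerivAt_sin y).div (hasDerivAt_id y) hy0.ne'
      rw [hd.deriv]
      have := lemA hy0 hy.2
      apply div_neg_of_neg_of_pos
      · nlinarith
      · positivity
  exact key ⟨ha, hab.trans hb⟩ ⟨ha.trans hab, hb⟩ hab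

-- sinh x / x strictly increasing on (0, ∞)
lemma lemD {a b : ℝ} (ha : 0 < a) (hab : a < b) :
    Real.sinh a / a < Real.sinh b / b := by
  have key : StrictMonoOn (fun y : ℝ => Real.sinh y / y) (Ioi 0) := by
    apply strictMonoOn_of_deriv_pos (convex_Ioi 0)
    · apply ContinuousOn.div Real.continuous_sinh.continuousOn continuousOn_id
      intro y hy; exact (mem_Ioi.1 hy).ne'
    · intro y hy
      rw [interior_Ioi] at hy
      have hy0 : (0:ℝ) < y := hy
      have hd : HasDerivAt (fun y : ℝ => Real.sinh y / y)
          ((Real.cosh y * y - Real.sinh y * 1) / (y ^ 2)) y :=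
        (Real.hasDerivAt_sinh y).div (hasDerivAt_id y) hy0.ne'
      rw [hd.deriv]
      have := lemB hy0
      apply div_pos
      · nlinarith
      · positivity
  exact key (mem_Ioi.2 ha) (mem_Ioi.2 (ha.trans hab)) hab

lemma lemE {x : ℝ} (hx : 0 < x) : Real.sin x / x < 1 :=
  (div_lt_one hx).2 (Real.sin_lt hx)

lemma lemF {x : ℝ} (hx : 0 < x) : 1 < Real.sinh x / x :=
  (one_lt_div hx).2 (Real.self_lt_sinh_iff.2 hx)

lemma div_aux {s c t : ℝ} (hc : c ≠ 0) (ht : t ≠ 0) : s / c = t * (s / (c * t)) := by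
  field_simp


end SnAux

/-- The family `κ ↦ sn_κ(t)` is strictly decreasing in `κ`:
if `κ₁ < κ₂` and `0 < t < π_{κ₂}`, then `sn_{κ₁}(t) > sn_{κ₂}(t)`. -/
theorem sn_strictAnti (κ₁ κ₂ t : ℝ) (hκ : κ₁ < κ₂) (ht : 0 < t)
    (htπ : 0 < κ₂ → t < Real.pi / Real.sqrt κ₂) :
    sn κ₂ t < sn κ₁ t := by
  rcases lt_trichotomy κ₂ 0 with h2 | h2 | h2
  · -- both negative
    have h1 : κ₁ < 0 := hκ.trans h2
    simp only [sn, if_neg (not_lt.2 h2.le), if_neg h2.ne, if_neg (not_lt.2 h1.le), if_neg h1.ne]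
    set a := Real.sqrt (-κ₂) with ha_def
    set b := Real.sqrt (-κ₁) with hb_def
    have ha : 0 < a := Real.sqrt_pos.2 (by linarith)
    have hb : 0 < b := Real.sqrt_pos.2 (by linarith)
    have hab : a < b := Real.sqrt_lt_sqrt (by linarith) (by linarith)
    have key := lemD (mul_pos ha ht) (mul_lt_mul_of_pos_right hab ht)
    rw [div_aux ha.ne' ht.ne', div_aux hb.ne' ht.ne']
    exact mul_lt_mul_of_pos_left key ht
  · -- κ₂ = 0, κ₁ < 0
    have h1 : κ₁ < 0 := hκ.trans_eq h2
    subst h2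
    simp only [sn, lt_irrefl, if_neg, if_pos rfl, if_true, if_neg (not_lt.2 h1.le),
      if_neg h1.ne, if_false]
    set b := Real.sqrt (-κ₁) with hb_def
    have hb : 0 < b := Real.sqrt_pos.2 (by linarith)
    have key := lemF (mul_pos hb ht)
    rw [div_aux hb.ne' ht.ne']
    nlinarith
  · -- κ₂ > 0
    have hb : 0 < Real.sqrt κ₂ := Real.sqrt_pos.2 h2
    have hbπ : Real.sqrt κ₂ * t < Real.pi := by
      have := (lt_div_iff₀ hb).1 (htπ h2)
      linarith
    rcases lt_trichotomy κ₁ 0 with h1 | h1 | h1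
    · -- κ₁ < 0 < κ₂
      simp only [sn, if_pos h2, if_neg (not_lt.2 h1.le), if_neg h1.ne]
      set a := Real.sqrt (-κ₁) with ha_def
      have ha : 0 < a := Real.sqrt_pos.2 (by linarith)
      have k1 := lemE (mul_pos hb ht)
      have k2 := lemF (mul_pos ha ht)
      rw [div_aux hb.ne' ht.ne', div_aux ha.ne' ht.ne']
      nlinarith
    · -- κ₁ = 0 < κ₂
      subst h1
      simp only [sn, if_pos h2, lt_irrefl, if_neg, if_pos rfl, if_true, if_false]
      have k1 := lemE (mul_pos hb ht)
      rw [div_aux hb.ne' ht.ne']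
      nlinarith
    · -- 0 < κ₁ < κ₂
      simp only [sn, if_pos h2, if_pos h1]
      have ha : 0 < Real.sqrt κ₁ := Real.sqrt_pos.2 h1
      have hab : Real.sqrt κ₁ < Real.sqrt κ₂ := Real.sqrt_lt_sqrt h1.le hκ
      have key := lemC (mul_pos ha ht) (mul_lt_mul_of_pos_right hab ht)
        (by linarith : Real.sqrt κ₂ * t < Real.pi)
      rw [div_aux ha.ne' ht.ne', div_aux hb.ne' ht.ne']
      exact mul_lt_mul_of_pos_left key ht
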